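/- Let W = (W_t)_{t≥0} be a bifractional Brownian motion with parameters H ∈ (0,1) and K ∈ (0,1]. Then for all s, t ≥ 0, 2^{-K}·|t−s|^{2HK} ≤ E[(W_t − W_s)²] ≤ 2^{1−K}·|t−s|^{2HK}. -/

import Mathlib

open MeasureTheory ProbabilityTheory Real Set Filter

noncomputable section

/-- A bifractional Brownian motion with parameters `H` and `K`, indexed by `t ≥ 0`:
a centered Gaussian process with a.s. continuous sample paths and covariance
`E[W_s W_t] = 2^(-K) * ((t^(2H) + s^(2H))^K - |t - s|^(2HK))`. -/
structure IsBifBM {Ω : Type*} [MeasurableSpace Ω] (P : Measure Ω)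
    (H K : ℝ) (W : ℝ → Ω → ℝ) : Prop where
  meas : ∀ t : ℝ, 0 ≤ t → Measurable (W t)
  gaussian : ∀ (n : ℕ) (ts : Fin n → ℝ), (∀ i, 0 ≤ ts i) → ∀ c : Fin n → ℝ,
    ∃ v : NNReal, P.map (fun ω => ∑ i, c i * W (ts i) ω) = gaussianReal 0 v
  cont : ∀ᵐ ω ∂P, ContinuousOn (fun t => W t ω) (Set.Ici 0)
  cov : ∀ s t : ℝ, 0 ≤ s → 0 ≤ t →
    ∫ ω, W s ω * W t ω ∂P
      = (2:ℝ) ^ (-K) * ((t ^ (2*H) + s ^ (2*H)) ^ K - |t - s| ^ (2*H*K))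

/-! ### Auxiliary analytic lemmas -/

/-- Power mean inequality: `x^K + y^K ≤ 2^(1-K) (x+y)^K` for `K ∈ (0,1]`. -/
lemma aux_pow_mean {K : ℝ} (hK0 : 0 < K) (hK1 : K ≤ 1) {x y : ℝ}
    (hx : 0 ≤ x) (hy : 0 ≤ y) :
    x ^ K + y ^ K ≤ (2:ℝ) ^ (1 - K) * (x + y) ^ K := by
  lift x to NNReal using hx
  lift y to NNReal using hy
  have key : x ^ K + y ^ K ≤ (2:NNReal) ^ (1 - K) * (x + y) ^ K := by
    have hp : (1:ℝ) ≤ 1 / K := by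
      rw [le_div_iff₀ hK0]; linarith
    have h := NNReal.rpow_add_le_mul_rpow_add_rpow (x ^ K) (y ^ K) hp
    have e : ∀ z : NNReal, (z ^ K) ^ (1 / K) = z := fun z => by
      rw [← NNReal.rpow_mul, mul_one_div, div_self hK0.ne', NNReal.rpow_one]
    rw [e x, e y] at h
    have h2 := NNReal.rpow_le_rpow h hK0.le
    rwa [← NNReal.rpow_mul, one_div_mul_cancel hK0.ne', NNReal.rpow_one,
      NNReal.mul_rpow, ← NNReal.rpow_mul,
      show (1 / K - 1) * K = 1 - K by field_simp] at h2
  have := NNReal.coe_le_coe.2 key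
  push_cast [NNReal.coe_rpow] at this
  exact_mod_cast this

lemma aux_rpow_le {a b : ℝ} (hab : a ≤ b) : (2:ℝ) ^ a ≤ (2:ℝ) ^ b :=
  rpow_le_rpow_of_exponent_le one_le_two hab

/-- `2^(5/4) ≤ 8/3`. -/
lemma aux_54 : (2:ℝ) ^ ((5:ℝ)/4) ≤ 8/3 := by
  have h4 : ((2:ℝ) ^ ((5:ℝ)/4)) ^ (4:ℕ) = 32 := by
    rw [← Real.rpow_natCast ((2:ℝ) ^ ((5:ℝ)/4)) 4, ← Real.rpow_mul (by norm_num : (0:ℝ) ≤ 2),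
      show ((5:ℝ)/4 * (4:ℕ) : ℝ) = ((5:ℕ):ℝ) by norm_num, Real.rpow_natCast]
    norm_num
  refine le_of_pow_le_pow_left₀ (n := 4) (by norm_num) (by norm_num) ?_
  rw [h4]; norm_num

/-- `1 - K ≤ 2^(1-3K)` for `K ∈ [1/2, 1]`. -/
lemma aux_D {K : ℝ} (hK : 1/2 ≤ K) (hK1 : K ≤ 1) : 1 - K ≤ (2:ℝ) ^ (1 - 3*K) := by
  rcases le_total K (5/8) with h | h
  · have h1 : (2:ℝ) ^ ((7:ℝ)/8) ≤ 2 := by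
      have := aux_rpow_le (show (7:ℝ)/8 ≤ 1 by norm_num)
      rwa [rpow_one] at this
    have h2 : (1:ℝ)/2 ≤ (2:ℝ) ^ (-(7:ℝ)/8) := by
      rw [show (-(7:ℝ)/8) = -((7:ℝ)/8) by ring, rpow_neg (by norm_num : (0:ℝ) ≤ 2)]
      rw [show (1:ℝ)/2 = 2⁻¹ by norm_num]
      exact inv_anti₀ (rpow_pos_of_pos two_pos _) h1
    calc 1 - K ≤ 1/2 := by linarith
      _ ≤ (2:ℝ) ^ (-(7:ℝ)/8) := h2
      _ ≤ (2:ℝ) ^ (1 - 3*K) := aux_rpow_le (by linarith)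
  · rcases le_total K (3/4) with h' | h'
    · have h2 : (3:ℝ)/8 ≤ (2:ℝ) ^ (-(5:ℝ)/4) := by
        rw [show (-(5:ℝ)/4) = -((5:ℝ)/4) by ring, rpow_neg (by norm_num : (0:ℝ) ≤ 2)]
        have h3 : (0:ℝ) < (2:ℝ) ^ ((5:ℝ)/4) := rpow_pos_of_pos two_pos _
        rw [show (3:ℝ)/8 = (8/3:ℝ)⁻¹ by norm_num]
        exact inv_anti₀ h3 aux_54
      calc 1 - K ≤ 3/8 := by linarith
        _ ≤ (2:ℝ) ^ (-(5:ℝ)/4) := h2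
        _ ≤ (2:ℝ) ^ (1 - 3*K) := aux_rpow_le (by linarith)
    · have h2 : (1:ℝ)/4 ≤ (2:ℝ) ^ (-2:ℝ) := by
        rw [show ((-2:ℝ) = ((-2:ℤ):ℝ)) by norm_num, Real.rpow_intCast]
        norm_num
      calc 1 - K ≤ 1/4 := by linarith
        _ ≤ (2:ℝ) ^ (-2:ℝ) := h2
        _ ≤ (2:ℝ) ^ (1 - 3*K) := aux_rpow_le (by linarith)

/-- Key inequality for the regime `2HK ≥ 1`. -/
lemma aux_C {H K u : ℝ} (hH0 : 0 < H) (hH1 : H < 1) (hK0 : 0 < K) (hK1 : K ≤ 1)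
    (hp1 : 1 ≤ 2*H*K) (hu0 : 0 ≤ u) (hu1 : u ≤ 1) :
    (1 - K) * (1 - (1-u) ^ (2*H)) ≤ (2:ℝ) ^ (-K) * u ^ (2*H*K - 1) := by
  have h2H1 : 1 ≤ 2*H := by nlinarith
  have h2H0 : (0:ℝ) < 2*H := by linarith
  rcases eq_or_lt_of_le hu0 with h0 | hu0'
  · -- u = 0
    rw [← h0]
    simp only [sub_zero, Real.one_rpow, sub_self, mul_zero]
    positivity
  have hKhalf : (1:ℝ)/2 ≤ K := by nlinarith
  have hD := aux_D hKhalf hK1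
  have hp2 : 2*H*K ≤ 2*K := by nlinarith
  have hple2 : 2*H*K - 2 ≤ 0 := by nlinarith
  -- Bernoulli : 1 - (1-u)^(2H) ≤ 2H u
  have hber : 1 - (1-u) ^ (2*H) ≤ 2*H*u := by
    have := one_add_mul_self_le_rpow_one_add (s := -u) (by linarith) h2H1
    rw [show (1:ℝ) + -u = 1 - u by ring] at this
    linarith
  have hbound1 : 1 - (1-u) ^ (2*H) ≤ 1 := by
    have : (0:ℝ) ≤ (1-u) ^ (2*H) := rpow_nonneg (by linarith) _
    linarith
  have hKnn : (0:ℝ) ≤ 1 - K := by linarith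
  -- common tail: (2H)^(1-2HK) ≥ 2^(1-2K), so 2^(-K)*(2H)^(1-2HK) ≥ 2^(1-3K) ≥ 1-K
  have hcommon : 1 - K ≤ (2:ℝ) ^ (-K) * (2*H) ^ (1 - 2*H*K) := by
    have c1 : (2:ℝ) ^ (1 - 2*H*K) ≤ (2*H) ^ (1 - 2*H*K) :=
      rpow_le_rpow_of_nonpos h2H0 (by linarith) (by linarith)
    have c2 : (2:ℝ) ^ (1 - 2*K) ≤ (2:ℝ) ^ (1 - 2*H*K) := aux_rpow_le (by linarith)
    have c3 : (2:ℝ) ^ (1 - 3*K) = (2:ℝ) ^ (-K) * (2:ℝ) ^ (1 - 2*K) := by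
      rw [← rpow_add two_pos]; ring_nf
    have h2K : (0:ℝ) < (2:ℝ) ^ (-K) := rpow_pos_of_pos two_pos _
    calc 1 - K ≤ (2:ℝ) ^ (1 - 3*K) := hD
      _ = (2:ℝ) ^ (-K) * (2:ℝ) ^ (1 - 2*K) := c3
      _ ≤ (2:ℝ) ^ (-K) * (2*H) ^ (1 - 2*H*K) := by
          apply mul_le_mul_of_nonneg_left _ h2K.le
          linarith
  rcases le_total u (1/(2*H)) with hcase | hcase
  · -- small u : use 1-(1-u)^(2H) ≤ 2Hu
    have step : (1 - K) * (2*H*u) ≤ (2:ℝ) ^ (-K) * u ^ (2*H*K - 1) := by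
      have hu2 : ((1:ℝ)/(2*H)) ^ (2*H*K - 2) ≤ u ^ (2*H*K - 2) :=
        rpow_le_rpow_of_nonpos hu0' hcase hple2
      have hinv : ((1:ℝ)/(2*H)) ^ (2*H*K - 2) = (2*H) ^ (2 - 2*H*K) := by
        rw [one_div, ← Real.rpow_neg_one (2*H), ← Real.rpow_mul h2H0.le]
        ring_nf
      have hsplit : (2*H) ^ (2 - 2*H*K) = (2*H) ^ (1 - 2*H*K) * (2*H) := by
        rw [← Real.rpow_add_one (by positivity : (2*H:ℝ) ≠ 0)]
        ring_nf
      have h1 : (1 - K) * (2*H) ≤ (2:ℝ) ^ (-K) * u ^ (2*H*K - 2) := by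
        calc (1 - K) * (2*H) ≤ ((2:ℝ) ^ (-K) * (2*H) ^ (1 - 2*H*K)) * (2*H) := by
              apply mul_le_mul_of_nonneg_right hcommon h2H0.le
          _ = (2:ℝ) ^ (-K) * ((2*H) ^ (2 - 2*H*K)) := by rw [hsplit]; ring
          _ = (2:ℝ) ^ (-K) * ((1:ℝ)/(2*H)) ^ (2*H*K - 2) := by rw [hinv]
          _ ≤ (2:ℝ) ^ (-K) * u ^ (2*H*K - 2) := by
              apply mul_le_mul_of_nonneg_left hu2 (rpow_pos_of_pos two_pos _).le
      have hmul : (2:ℝ) ^ (-K) * u ^ (2*H*K - 2) * u = (2:ℝ) ^ (-K) * u ^ (2*H*K - 1) := by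
        rw [mul_assoc, ← Real.rpow_add_one hu0'.ne']
        ring_nf
      calc (1 - K) * (2*H*u) = ((1 - K) * (2*H)) * u := by ring
        _ ≤ ((2:ℝ) ^ (-K) * u ^ (2*H*K - 2)) * u := mul_le_mul_of_nonneg_right h1 hu0
        _ = (2:ℝ) ^ (-K) * u ^ (2*H*K - 1) := hmul
    calc (1 - K) * (1 - (1-u) ^ (2*H)) ≤ (1 - K) * (2*H*u) :=
          mul_le_mul_of_nonneg_left hber hKnn
      _ ≤ (2:ℝ) ^ (-K) * u ^ (2*H*K - 1) := step
  · -- large u : use 1-(1-u)^(2H) ≤ 1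
    have hu2 : ((1:ℝ)/(2*H)) ^ (2*H*K - 1) ≤ u ^ (2*H*K - 1) :=
      rpow_le_rpow (by positivity) hcase (by linarith)
    have hinv : ((1:ℝ)/(2*H)) ^ (2*H*K - 1) = (2*H) ^ (1 - 2*H*K) := by
      rw [one_div, ← Real.rpow_neg_one (2*H), ← Real.rpow_mul h2H0.le]
      ring_nf
    have step : 1 - K ≤ (2:ℝ) ^ (-K) * u ^ (2*H*K - 1) := by
      calc 1 - K ≤ (2:ℝ) ^ (-K) * (2*H) ^ (1 - 2*H*K) := hcommon
        _ = (2:ℝ) ^ (-K) * ((1:ℝ)/(2*H)) ^ (2*H*K - 1) := by rw [hinv]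
        _ ≤ (2:ℝ) ^ (-K) * u ^ (2*H*K - 1) := by
            apply mul_le_mul_of_nonneg_left hu2 (rpow_pos_of_pos two_pos _).le
    calc (1 - K) * (1 - (1-u) ^ (2*H)) ≤ (1 - K) * 1 :=
          mul_le_mul_of_nonneg_left hbound1 hKnn
      _ = 1 - K := mul_one _
      _ ≤ (2:ℝ) ^ (-K) * u ^ (2*H*K - 1) := step

/-- Chord bound: `(1+x)^(K-1) ≤ 2^(K-1) (2-x)^(1-K)` for `x ∈ [0,1]`, `K ∈ (0,1]`. -/
lemma aux_chord {K x : ℝ} (hK0 : 0 < K) (hK1 : K ≤ 1) (hx0 : 0 ≤ x) (hx1 : x ≤ 1) :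
    (1+x) ^ (K-1) ≤ (2:ℝ) ^ (K-1) * (2-x) ^ (1-K) := by
  have h1 : (0:ℝ) < 1 + x := by linarith
  have h2 : (0:ℝ) < 2 - x := by linarith
  have key : (2:ℝ) ≤ (1+x)*(2-x) := by nlinarith
  have hmain : (2:ℝ) ^ (1-K) ≤ (1+x) ^ (1-K) * (2-x) ^ (1-K) := by
    have := rpow_le_rpow (by norm_num : (0:ℝ) ≤ 2) key (by linarith : (0:ℝ) ≤ 1 - K)
    rwa [mul_rpow h1.le h2.le] at this
  have hpos1 : (0:ℝ) < (1+x) ^ (1-K) := rpow_pos_of_pos h1 _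
  have hpos2 : (0:ℝ) < (2:ℝ) ^ (1-K) := rpow_pos_of_pos two_pos _
  have hpos3 : (0:ℝ) < (2-x) ^ (1-K) := rpow_pos_of_pos h2 _
  rw [show K - 1 = -(1-K) by ring, rpow_neg h1.le, rpow_neg (by norm_num : (0:ℝ) ≤ 2)]
  rw [inv_le_iff_one_le_mul₀' hpos1]
  have hmul := mul_le_mul_of_nonneg_left hmain (inv_nonneg.2 hpos2.le)
  rw [inv_mul_cancel₀ hpos2.ne'] at hmul
  calc (1:ℝ) ≤ ((2:ℝ) ^ (1-K))⁻¹ * ((1+x) ^ (1-K) * (2-x) ^ (1-K)) := hmul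
    _ = (1+x) ^ (1-K) * (((2:ℝ) ^ (1-K))⁻¹ * (2-x) ^ (1-K)) := by ring

/-- The quasi-helix lower bound inequality (the hard direction), for `0 ≤ s ≤ t`. -/
lemma aux_star {H K : ℝ} (hH0 : 0 < H) (hH1 : H < 1) (hK0 : 0 < K) (hK1 : K ≤ 1)
    {s t : ℝ} (hs : 0 ≤ s) (hst : s ≤ t) :
    (2:ℝ) ^ (1-K) * (t ^ (2*H) + s ^ (2*H)) ^ K
      ≤ t ^ (2*H*K) + s ^ (2*H*K) + (2:ℝ) ^ (-K) * (t-s) ^ (2*H*K) := by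
  have hp0 : (0:ℝ) < 2*H*K := by positivity
  have h2H0 : (0:ℝ) < 2*H := by linarith
  -- ψ y = y^p + 2^(-K) (y-s)^p - 2^(1-K) (y^(2H) + s^(2H))^K is monotone on [s, ∞)
  set ψ : ℝ → ℝ := fun y =>
    y ^ (2*H*K) + (2:ℝ) ^ (-K) * (y-s) ^ (2*H*K)
      - (2:ℝ) ^ (1-K) * ((y ^ (2*H) + s ^ (2*H)) ^ K) with hψ
  have hψs : ψ s = - s ^ (2*H*K) := by
    have h0 : ((0:ℝ)) ^ (2*H*K) = 0 := Real.zero_rpow hp0.ne'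
    have hdbl : (s ^ (2*H) + s ^ (2*H)) = 2 * s ^ (2*H) := by ring
    have hmul : ((2:ℝ) * s ^ (2*H)) ^ K = (2:ℝ) ^ K * s ^ (2*H*K) := by
      rw [mul_rpow (by norm_num) (rpow_nonneg hs _), ← Real.rpow_mul hs]
    have h2 : (2:ℝ) ^ (1-K) * ((2:ℝ) ^ K * s ^ (2*H*K)) = 2 * s ^ (2*H*K) := by
      rw [← mul_assoc, ← rpow_add two_pos]
      norm_num
    simp only [hψ, sub_self, h0, mul_zero, add_zero, hdbl, hmul, h2]
    ring
  have hmono : MonotoneOn ψ (Set.Ici s) := by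
    -- continuity
    have crp : Continuous fun z : ℝ => z ^ (2*H*K) := Real.continuous_rpow_const hp0.le
    have crp2H : Continuous fun z : ℝ => z ^ (2*H) := Real.continuous_rpow_const h2H0.le
    have crpK : Continuous fun z : ℝ => z ^ K := Real.continuous_rpow_const hK0.le
    have hcont : Continuous ψ := by
      apply Continuous.sub
      · exact crp.add (continuous_const.mul (crp.comp (continuous_id.sub continuous_const)))
      · exact continuous_const.mul (crpK.comp (crp2H.add continuous_const))
    -- derivative at interior points
    have hderiv : ∀ x ∈ Set.Ioi s, HasDerivAt ψ
        ((2*H*K) * (x ^ (2*H*K-1) + (2:ℝ) ^ (-K) * (x-s) ^ (2*H*K-1)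
          - (2:ℝ) ^ (1-K) * (x ^ (2*H-1) * (x ^ (2*H) + s ^ (2*H)) ^ (K-1)))) x := by
      intro x hx
      have hx' : s < x := hx
      have hx0 : 0 < x := lt_of_le_of_lt hs hx'
      have hxs : 0 < x - s := sub_pos.2 hx'
      have hA : 0 < x ^ (2*H) + s ^ (2*H) :=
        lt_of_lt_of_le (rpow_pos_of_pos hx0 _) (le_add_of_nonneg_right (rpow_nonneg hs _))
      have d1 : HasDerivAt (fun y : ℝ => y ^ (2*H*K)) ((2*H*K) * x ^ (2*H*K-1)) x :=
        Real.hasDerivAt_rpow_const (Or.inl hx0.ne')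
      have d2a : HasDerivAt (fun y : ℝ => y - s) 1 x := (hasDerivAt_id x).sub_const s
      have d2b : HasDerivAt (fun z : ℝ => z ^ (2*H*K)) ((2*H*K) * (x-s) ^ (2*H*K-1)) (x - s) :=
        Real.hasDerivAt_rpow_const (Or.inl hxs.ne')
      have d2 := (d2b.comp x d2a).const_mul ((2:ℝ) ^ (-K))
      have d3a : HasDerivAt (fun y : ℝ => y ^ (2*H) + s ^ (2*H)) ((2*H) * x ^ (2*H-1)) x :=
        (Real.hasDerivAt_rpow_const (Or.inl hx0.ne')).add_const _
      have d3b : HasDerivAt (fun z : ℝ => z ^ K) (K * (x ^ (2*H) + s ^ (2*H)) ^ (K-1))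
          (x ^ (2*H) + s ^ (2*H)) := Real.hasDerivAt_rpow_const (Or.inl hA.ne')
      have d3 := (d3b.comp x d3a).const_mul ((2:ℝ) ^ (1-K))
      have := (d1.add d2).sub d3
      convert this using 1
      · rfl
      · rfl
      · rfl
      · ring
    -- derivative nonneg
    have hderiv_nonneg : ∀ x ∈ Set.Ioi s,
        0 ≤ (2*H*K) * (x ^ (2*H*K-1) + (2:ℝ) ^ (-K) * (x-s) ^ (2*H*K-1)
          - (2:ℝ) ^ (1-K) * (x ^ (2*H-1) * (x ^ (2*H) + s ^ (2*H)) ^ (K-1))) := by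
      intro x hx
      have hx' : s < x := hx
      have hx0 : 0 < x := lt_of_le_of_lt hs hx'
      have hxs : 0 < x - s := sub_pos.2 hx'
      have hA : 0 < x ^ (2*H) + s ^ (2*H) :=
        lt_of_lt_of_le (rpow_pos_of_pos hx0 _) (le_add_of_nonneg_right (rpow_nonneg hs _))
      apply mul_nonneg hp0.le
      rw [sub_nonneg]
      -- KEY : 2^(1-K) x^(2H-1) A^(K-1) ≤ x^(p-1) + 2^(-K) (x-s)^(p-1)
      have hcollapse : x ^ (2*H-1) * x ^ (2*H*(K-1)) = x ^ (2*H*K-1) := by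
        rw [← Real.rpow_add hx0]; ring_nf
      rcases le_total (2*H*K) 1 with hple | hpge
      · -- case 2HK ≤ 1
        have hA1 : (x ^ (2*H) + s ^ (2*H)) ^ (K-1) ≤ (x ^ (2*H)) ^ (K-1) :=
          rpow_le_rpow_of_nonpos (rpow_pos_of_pos hx0 _)
            (le_add_of_nonneg_right (rpow_nonneg hs _)) (by linarith)
        have hA2 : (x ^ (2*H)) ^ (K-1) = x ^ (2*H*(K-1)) := by
          rw [← Real.rpow_mul hx0.le]
        have hxsle : x ^ (2*H*K-1) ≤ (x-s) ^ (2*H*K-1) :=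
          rpow_le_rpow_of_nonpos hxs (by linarith) (by linarith)
        have h21 : (2:ℝ) ^ (1-K) = 2 * (2:ℝ) ^ (-K) := by
          rw [show (1:ℝ) - K = 1 + -K by ring, rpow_add two_pos, rpow_one]
        have h2K1 : (2:ℝ) ^ (-K) ≤ 1 := by
          have := aux_rpow_le (show -K ≤ 0 by linarith)
          rwa [rpow_zero] at this
        have h2Kpos : (0:ℝ) < (2:ℝ) ^ (-K) := rpow_pos_of_pos two_pos _
        have hb : (2:ℝ) ^ (1-K) * (x ^ (2*H-1) * (x ^ (2*H) + s ^ (2*H)) ^ (K-1))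
            ≤ (2:ℝ) ^ (1-K) * x ^ (2*H*K-1) := by
          apply mul_le_mul_of_nonneg_left _ (rpow_pos_of_pos two_pos _).le
          calc x ^ (2*H-1) * (x ^ (2*H) + s ^ (2*H)) ^ (K-1)
              ≤ x ^ (2*H-1) * (x ^ (2*H)) ^ (K-1) := by
                apply mul_le_mul_of_nonneg_left hA1 (rpow_nonneg hx0.le _)
            _ = x ^ (2*H*K-1) := by rw [hA2, hcollapse]
        have hxp : (0:ℝ) ≤ x ^ (2*H*K-1) := rpow_nonneg hx0.le _
        calc (2:ℝ) ^ (1-K) * (x ^ (2*H-1) * (x ^ (2*H) + s ^ (2*H)) ^ (K-1))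
            ≤ (2:ℝ) ^ (1-K) * x ^ (2*H*K-1) := hb
          _ = x ^ (2*H*K-1) + (2:ℝ) ^ (-K) * x ^ (2*H*K-1)
              + ((2:ℝ) ^ (-K) - 1) * x ^ (2*H*K-1) := by rw [h21]; ring
          _ ≤ x ^ (2*H*K-1) + (2:ℝ) ^ (-K) * (x-s) ^ (2*H*K-1) := by
              nlinarith [mul_le_mul_of_nonneg_left hxsle h2Kpos.le]
      · -- case 2HK ≥ 1 : chord + tangent + aux_C
        set w : ℝ := (s/x) ^ (2*H) with hw
        have hw0 : 0 ≤ w := rpow_nonneg (div_nonneg hs hx0.le) _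
        have hw1 : w ≤ 1 := Real.rpow_le_one (div_nonneg hs hx0.le)
          ((div_le_one hx0).2 hx'.le) h2H0.le
        have hAw : x ^ (2*H) + s ^ (2*H) = x ^ (2*H) * (1 + w) := by
          rw [hw, Real.div_rpow hs hx0.le]
          field_simp
        have hxpow : (0:ℝ) < x ^ (2*H) := rpow_pos_of_pos hx0 _
        have hAK : (x ^ (2*H) + s ^ (2*H)) ^ (K-1)
            = (x ^ (2*H)) ^ (K-1) * (1 + w) ^ (K-1) := by
          rw [hAw, mul_rpow hxpow.le (by linarith)]
        have hchord := aux_chord hK0 hK1 hw0 hw1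
        have htang : (2 - w) ^ (1-K) ≤ 1 + (1-K) * (1-w) := by
          have := rpow_one_add_le_one_add_mul_self (s := 1 - w) (by linarith)
            (by linarith : (0:ℝ) ≤ 1-K) (by linarith : 1-K ≤ 1)
          rw [show (1:ℝ) + (1 - w) = 2 - w by ring] at this
          linarith
        have h2cancel : (2:ℝ) ^ (1-K) * (2:ℝ) ^ (K-1) = 1 := by
          rw [← rpow_add two_pos]; norm_num
        have hA2 : (x ^ (2*H)) ^ (K-1) = x ^ (2*H*(K-1)) := by
          rw [← Real.rpow_mul hx0.le]
        -- combine: 2^(1-K) x^(2H-1) A^(K-1) ≤ x^(p-1) (1 + (1-K)(1-w))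
        have hstep1 : (2:ℝ) ^ (1-K) * (x ^ (2*H-1) * (x ^ (2*H) + s ^ (2*H)) ^ (K-1))
            ≤ x ^ (2*H*K-1) * (1 + (1-K) * (1-w)) := by
          rw [hAK, hA2]
          have hc1 : (1 + w) ^ (K-1) ≤ (2:ℝ) ^ (K-1) * (1 + (1-K)*(1-w)) := by
            calc (1 + w) ^ (K-1) ≤ (2:ℝ) ^ (K-1) * (2-w) ^ (1-K) := hchord
              _ ≤ (2:ℝ) ^ (K-1) * (1 + (1-K)*(1-w)) := by
                  apply mul_le_mul_of_nonneg_left htang (rpow_pos_of_pos two_pos _).le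
          have hxfac : (0:ℝ) ≤ x ^ (2*H-1) * x ^ (2*H*(K-1)) := by positivity
          calc (2:ℝ) ^ (1-K) * (x ^ (2*H-1) * (x ^ (2*H*(K-1)) * (1 + w) ^ (K-1)))
              = ((2:ℝ) ^ (1-K) * (1 + w) ^ (K-1)) * (x ^ (2*H-1) * x ^ (2*H*(K-1))) := by
                ring
            _ ≤ ((2:ℝ) ^ (1-K) * ((2:ℝ) ^ (K-1) * (1 + (1-K)*(1-w))))
                * (x ^ (2*H-1) * x ^ (2*H*(K-1))) := by
                apply mul_le_mul_of_nonneg_right _ hxfac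
                apply mul_le_mul_of_nonneg_left hc1 (rpow_pos_of_pos two_pos _).le
            _ = ((2:ℝ) ^ (1-K) * (2:ℝ) ^ (K-1))
                * ((1 + (1-K)*(1-w)) * (x ^ (2*H-1) * x ^ (2*H*(K-1)))) := by ring
            _ = (1 + (1-K)*(1-w)) * (x ^ (2*H-1) * x ^ (2*H*(K-1))) := by
                rw [h2cancel, one_mul]
            _ = x ^ (2*H*K-1) * (1 + (1-K) * (1-w)) := by rw [hcollapse]; ring
        -- now use aux_C with u = (x-s)/x
        set u : ℝ := (x - s)/x with hu
        have hu0 : 0 < u := div_pos hxs hx0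
        have hu1 : u ≤ 1 := by
          rw [hu, div_le_one hx0]; linarith
        have huw : 1 - u = s/x := by rw [hu]; field_simp; ring
        have hC := aux_C hH0 hH1 hK0 hK1 hpge hu0.le hu1
        rw [huw] at hC
        -- hC : (1-K) * (1 - (s/x)^(2H)) ≤ 2^(-K) * u^(2HK-1)
        have hux : u * x = x - s := by rw [hu]; field_simp
        have hupow : u ^ (2*H*K-1) * x ^ (2*H*K-1) = (x-s) ^ (2*H*K-1) := by
          rw [← mul_rpow hu0.le hx0.le, hux]
        have hstep2 : (1-K) * (1-w) * x ^ (2*H*K-1) ≤ (2:ℝ) ^ (-K) * (x-s) ^ (2*H*K-1) := by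
          have hxp : (0:ℝ) ≤ x ^ (2*H*K-1) := rpow_nonneg hx0.le _
          calc (1-K) * (1-w) * x ^ (2*H*K-1)
              ≤ ((2:ℝ) ^ (-K) * u ^ (2*H*K-1)) * x ^ (2*H*K-1) :=
                mul_le_mul_of_nonneg_right hC hxp
            _ = (2:ℝ) ^ (-K) * (u ^ (2*H*K-1) * x ^ (2*H*K-1)) := by ring
            _ = (2:ℝ) ^ (-K) * (x-s) ^ (2*H*K-1) := by rw [hupow]
        calc (2:ℝ) ^ (1-K) * (x ^ (2*H-1) * (x ^ (2*H) + s ^ (2*H)) ^ (K-1))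
            ≤ x ^ (2*H*K-1) * (1 + (1-K) * (1-w)) := hstep1
          _ = x ^ (2*H*K-1) + (1-K) * (1-w) * x ^ (2*H*K-1) := by ring
          _ ≤ x ^ (2*H*K-1) + (2:ℝ) ^ (-K) * (x-s) ^ (2*H*K-1) := by linarith
    apply monotoneOn_of_deriv_nonneg (convex_Ici s) hcont.continuousOn
    · intro x hx
      rw [interior_Ici] at hx
      exact ((hderiv x hx).differentiableAt).differentiableWithinAt
    · intro x hx
      rw [interior_Ici] at hx
      rw [(hderiv x hx).deriv]
      exact hderiv_nonneg x hx
  have hfin : ψ s ≤ ψ t := hmono (self_mem_Ici) (by exact hst) hst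
  rw [hψs] at hfin
  simp only [hψ] at hfin
  linarith

/-- Second moment of a Gaussian. -/
lemma aux_gaussian_memℒp_two (v : NNReal) : MemLp (id : ℝ → ℝ) 2 (gaussianReal 0 v) := by
  rw [memLp_two_iff_integrable_sq aestronglyMeasurable_id]
  by_cases hv : v = 0
  · subst hv
    rw [gaussianReal_zero_var]
    exact (integrable_const _).congr (ae_eq_dirac (fun x : ℝ => (id x) ^ 2)).symm
  · rw [gaussianReal_of_var_ne_zero 0 hv]
    rw [MeasureTheory.integrable_withDensity_iff (measurable_gaussianPDF 0 v)
      (ae_of_all _ fun x => ENNReal.ofReal_lt_top)]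
    have hv0 : (0:ℝ) < (v:ℝ) := by positivity
    have hb : (0:ℝ) < (2*(v:ℝ))⁻¹ := by positivity
    have h1 := (integrable_rpow_mul_exp_neg_mul_sq hb
      (by norm_num : (-1:ℝ) < 2)).const_mul ((Real.sqrt (2*π*(v:ℝ)))⁻¹)
    apply h1.congr
    apply ae_of_all
    intro x
    have hrp : x ^ (2:ℝ) = x ^ (2:ℕ) := by
      rw [show (2:ℝ) = ((2:ℕ):ℝ) by norm_num, Real.rpow_natCast]
    have htr : (gaussianPDF 0 v x).toReal = gaussianPDFReal 0 v x := by
      rw [gaussianPDF_def]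
      exact ENNReal.toReal_ofReal (gaussianPDFReal_nonneg 0 v x)
    simp only [htr, gaussianPDFReal_def, id_eq, hrp]
    rw [show -(x - 0) ^ 2 / (2 * (v:ℝ)) = -(2*(v:ℝ))⁻¹ * x ^ 2 by ring]
    ring

/-- For a bifractional Brownian motion `W` with parameters `H ∈ (0,1)`, `K ∈ (0,1]`:
`2^(-K) |t-s|^(2HK) ≤ E[(W_t - W_s)²] ≤ 2^(1-K) |t-s|^(2HK)` for all `s, t ≥ 0`. -/
theorem bifBM_increment_variance_bounds {Ω : Type*} [MeasurableSpace Ω]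
    (P : Measure Ω) [IsProbabilityMeasure P] (H K : ℝ)
    (hH : H ∈ Set.Ioo (0:ℝ) 1) (hK : K ∈ Set.Ioc (0:ℝ) 1)
    (W : ℝ → Ω → ℝ) (hW : IsBifBM P H K W) (s t : ℝ) (hs : 0 ≤ s) (ht : 0 ≤ t) :
    (2:ℝ) ^ (-K) * |t - s| ^ (2*H*K) ≤ ∫ ω, (W t ω - W s ω)^2 ∂P ∧
      ∫ ω, (W t ω - W s ω)^2 ∂P ≤ (2:ℝ) ^ (1-K) * |t - s| ^ (2*H*K) := by
  obtain ⟨hH0, hH1⟩ := hH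
  obtain ⟨hK0, hK1⟩ := hK
  have hp0 : (0:ℝ) < 2*H*K := by positivity
  -- membership in L²
  have hmem : ∀ u : ℝ, 0 ≤ u → MemLp (W u) 2 P := by
    intro u hu
    obtain ⟨v, hv⟩ := hW.gaussian 1 (fun _ => u) (fun _ => hu) (fun _ => 1)
    simp only [Fin.sum_univ_one, one_mul] at hv
    have hid := aux_gaussian_memℒp_two v
    rw [← hv] at hid
    exact (memLp_map_measure_iff aestronglyMeasurable_id
      (hW.meas u hu).aemeasurable).1 hid
  have ht2 : Integrable (fun ω => (W t ω) ^ 2) P := (hmem t ht).integrable_sq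
  have hs2 : Integrable (fun ω => (W s ω) ^ 2) P := (hmem s hs).integrable_sq
  have hprod : Integrable (fun ω => W t ω * W s ω) P := by
    have h1 := ((hmem t ht).add (hmem s hs)).integrable_sq
    have h2 := ((hmem t ht).sub (hmem s hs)).integrable_sq
    simp only [Pi.add_apply, Pi.sub_apply] at h1 h2
    apply ((h1.sub h2).const_mul (4:ℝ)⁻¹).congr
    apply ae_of_all
    intro ω
    simp only [Pi.sub_apply]
    ring
  -- self-covariances
  have hcov_self : ∀ u : ℝ, 0 ≤ u → ∫ ω, (W u ω) ^ 2 ∂P = u ^ (2*H*K) := by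
    intro u hu
    have hc := hW.cov u u hu hu
    simp only [sub_self, abs_zero] at hc
    rw [Real.zero_rpow hp0.ne'] at hc
    have hdbl : u ^ (2*H) + u ^ (2*H) = 2 * u ^ (2*H) := by ring
    have hmul : ((2:ℝ) * u ^ (2*H)) ^ K = (2:ℝ) ^ K * u ^ (2*H*K) := by
      rw [mul_rpow (by norm_num) (rpow_nonneg hu _), ← Real.rpow_mul hu]
    have : ∫ ω, (W u ω) ^ 2 ∂P = ∫ ω, W u ω * W u ω ∂P := by
      congr 1; ext ω; ring
    rw [this, hc, hdbl, hmul, sub_zero, ← mul_assoc, ← rpow_add two_pos]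
    norm_num
  -- expansion of the variance of the increment
  have hcross := hW.cov s t hs ht
  have hexp : ∫ ω, (W t ω - W s ω)^2 ∂P
      = t ^ (2*H*K) + s ^ (2*H*K)
        - 2 * ((2:ℝ) ^ (-K) * ((t ^ (2*H) + s ^ (2*H)) ^ K - |t - s| ^ (2*H*K))) := by
    have hswap : ∫ ω, W s ω * W t ω ∂P = ∫ ω, W t ω * W s ω ∂P := by
      congr 1; ext ω; ring
    have hsum : Integrable (fun ω => (W t ω) ^ 2 + (W s ω) ^ 2) P := ht2.add hs2
    have step1 : ∫ ω, (W t ω - W s ω)^2 ∂P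
        = ∫ ω, ((W t ω) ^ 2 + (W s ω) ^ 2 - 2 * (W t ω * W s ω)) ∂P := by
      congr 1; ext ω; ring
    rw [step1, integral_sub hsum (hprod.const_mul 2), integral_add ht2 hs2,
      integral_const_mul, hcov_self t ht, hcov_self s hs, ← hswap, hcross]
  -- abbreviations
  set G : ℝ := (t ^ (2*H) + s ^ (2*H)) ^ K with hG
  set c : ℝ := |t - s| ^ (2*H*K) with hc
  have h21 : (2:ℝ) ^ (1-K) = 2 * (2:ℝ) ^ (-K) := by
    rw [show (1:ℝ) - K = 1 + -K by ring, rpow_add two_pos, rpow_one]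
  -- upper bound : t^p + s^p ≤ 2^(1-K) G
  have hupper : t ^ (2*H*K) + s ^ (2*H*K) ≤ (2:ℝ) ^ (1-K) * G := by
    have := aux_pow_mean hK0 hK1 (rpow_nonneg ht (2*H)) (rpow_nonneg hs (2*H))
    rwa [← Real.rpow_mul ht, ← Real.rpow_mul hs] at this
  -- lower bound : 2^(1-K) G ≤ t^p + s^p + 2^(-K) c
  have hlower : (2:ℝ) ^ (1-K) * G ≤ t ^ (2*H*K) + s ^ (2*H*K) + (2:ℝ) ^ (-K) * c := by
    rcases le_total s t with hst | hst
    · have habs : |t - s| = t - s := abs_of_nonneg (by linarith)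
      rw [hG, hc, habs]
      exact aux_star hH0 hH1 hK0 hK1 hs hst
    · have habs : |t - s| = s - t := by rw [abs_sub_comm]; exact abs_of_nonneg (by linarith)
      rw [hG, hc, habs]
      have := aux_star hH0 hH1 hK0 hK1 ht hst
      have hcomm : s ^ (2*H) + t ^ (2*H) = t ^ (2*H) + s ^ (2*H) := by ring
      rw [hcomm] at this
      linarith
  have hexp2 : ∫ ω, (W t ω - W s ω)^2 ∂P
      = t ^ (2*H*K) + s ^ (2*H*K) - (2:ℝ) ^ (1-K) * G + (2:ℝ) ^ (1-K) * c := by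
    rw [hexp, h21]; ring
  have h2Kc : (2:ℝ) ^ (1-K) * c = 2 * ((2:ℝ) ^ (-K) * c) := by rw [h21]; ring
  constructor
  · rw [hexp2]
    linarith [hlower, h2Kc]
  · rw [hexp2]
    linarith [hupper]

end
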